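/- Let V be a real vector space with symmetric bilinear form q, let Sym* V be the symmetric algebra, and suppose there is an algebra structure on A = ⊕_{i=0}^{2n} A^{2i} with A^{2i} ≅ Sym^i V for i ≤ n and A^{2i} ≅ Sym^{2n-i} V for i ≥ n, on which the polarization identity ∫ a^{2n} = λ q(a,a)^n holds. Then for a ∈ V with q(a,a) = 0 and a ≠ 0, the power a^n is nonzero in A^{2n} while a^{n+1} = 0 in A^{2n+2}, provided q is nondegenerate of signature (3, b₂-3) (so there exists b with q(a,b) ≠ 0). -/

import Mathlib

/-!
Restricting the Fujiki relation to the line `a + t w` through an isotropic `a` gives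
`∫ (a + t w)^{2n} = λ tⁿ (2 q(a,w) + t q(w,w))ⁿ`. Comparing coefficients of `tʲ` shows
`∫ wʲ a^{2n-j} = 0` for `j < n`, while for `w = b` the coefficient of `tⁿ` gives `∫ bⁿ aⁿ ≠ 0`,
so `aⁿ ≠ 0`. Polarizing the vanishing one factor at a time (take the coefficient of `t` along
`w + t y`) yields `∫ a^{n+1} y₁ ⋯ y_{n-1} = 0` for all `yᵢ`, hence `a^{n+1} = 0` by duality.
-/

open Polynomial Finset

section LinePoly

variable {A : Type*} [CommRing A] [Algebra ℝ A] (f : A →ₗ[ℝ] ℝ)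

noncomputable def linePoly (c u v : A) (N : ℕ) : ℝ[X] :=
  ∑ i ∈ range (N + 1), C (N.choose i * f (c * v ^ i * u ^ (N - i))) * X ^ i

theorem eval_linePoly (c u v : A) (N : ℕ) (t : ℝ) :
    (linePoly f c u v N).eval t = f (c * (u + t • v) ^ N) := by
  rw [linePoly, eval_finsetSum, add_comm u, add_pow, mul_sum, map_sum]
  refine sum_congr rfl fun i _ => ?_
  have : c * ((t • v) ^ i * u ^ (N - i) * (N.choose i : A))
      = (t ^ i * N.choose i) • (c * v ^ i * u ^ (N - i)) := by
    rw [_root_.smul_pow, ← map_natCast (algebraMap ℝ A)]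
    simp only [Algebra.smul_def, map_mul, map_pow]
    ring
  rw [this, map_smul, smul_eq_mul]
  simp only [eval_mul, eval_C, eval_pow, eval_X]
  ring

theorem coeff_linePoly (c u v : A) {N i : ℕ} (hi : i ≤ N) :
    (linePoly f c u v N).coeff i = N.choose i * f (c * v ^ i * u ^ (N - i)) := by
  simp only [linePoly, finsetSum_coeff, coeff_C_mul, coeff_X_pow]
  rw [sum_eq_single i (fun j _ hj => by simp [hj.symm])
    (fun h => (h (mem_range.2 (by omega))).elim)]
  simp

theorem apply_mul_pow_mul_pow_eq_zero_of_forall {c u v : A} {N : ℕ}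
    (h : ∀ t : ℝ, f (c * (u + t • v) ^ N) = 0) {i : ℕ} (hi : i ≤ N) :
    f (c * v ^ i * u ^ (N - i)) = 0 := by
  have hzero : linePoly f c u v N = 0 := Polynomial.funext fun t => by
    rw [eval_linePoly, h, eval_zero]
  have := coeff_linePoly f c u v hi
  rw [hzero, coeff_zero, eq_comm, mul_eq_zero] at this
  exact this.resolve_left (by exact_mod_cast (Nat.choose_pos hi).ne')

end LinePoly

section Fujiki

variable {V A : Type*} [AddCommGroup V] [Module ℝ V] [CommRing A] [Algebra ℝ A]
  {q : LinearMap.BilinForm ℝ V} {ι : V →ₗ[ℝ] A} {intg : A →ₗ[ℝ] ℝ} {n : ℕ} {lam : ℝ}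

theorem linePoly_eq_of_isotropic (hsymm : ∀ x y, q x y = q y x)
    (hFujiki : ∀ x, intg (ι x ^ (2 * n)) = lam * q x x ^ n) {a : V} (haa : q a a = 0) (w : V) :
    linePoly intg 1 (ι a) (ι w) (2 * n) =
      C lam * (X ^ n * (C (2 * q a w) + C (q w w) * X) ^ n) := by
  refine Polynomial.funext fun t => ?_
  have hq : q (a + t • w) (a + t • w) = t * (2 * q a w + q w w * t) := by
    simp only [map_add, map_smul, LinearMap.add_apply, LinearMap.smul_apply, smul_eq_mul, haa,
      hsymm w a]
    ring
  rw [eval_linePoly, one_mul, ← map_smul, ← map_add, hFujiki, hq, mul_pow]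
  simp only [eval_mul, eval_C, eval_pow, eval_X, eval_add]

theorem apply_pow_mul_pow_eq_zero_of_isotropic (hsymm : ∀ x y, q x y = q y x)
    (hFujiki : ∀ x, intg (ι x ^ (2 * n)) = lam * q x x ^ n) {a : V} (haa : q a a = 0) (w : V)
    {j : ℕ} (hj : j < n) : intg (ι w ^ j * ι a ^ (2 * n - j)) = 0 := by
  have hcoeff := coeff_linePoly intg 1 (ι a) (ι w) (show j ≤ 2 * n by omega)
  rw [linePoly_eq_of_isotropic hsymm hFujiki haa, coeff_C_mul, coeff_X_pow_mul', if_neg (by omega),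
    mul_zero, eq_comm, one_mul] at hcoeff
  exact (mul_eq_zero.1 hcoeff).resolve_left (by exact_mod_cast (Nat.choose_pos (by omega)).ne')

theorem apply_pow_mul_pow_ne_zero_of_isotropic (hsymm : ∀ x y, q x y = q y x)
    (hFujiki : ∀ x, intg (ι x ^ (2 * n)) = lam * q x x ^ n) (hlam : lam ≠ 0) {a b : V}
    (haa : q a a = 0) (hbb : q b b = 0) (hab : q a b ≠ 0) : intg (ι b ^ n * ι a ^ n) ≠ 0 := by
  have hcoeff := coeff_linePoly intg 1 (ι a) (ι b) (show n ≤ 2 * n by omega)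
  rw [linePoly_eq_of_isotropic hsymm hFujiki haa, coeff_C_mul, coeff_X_pow_mul', if_pos le_rfl,
    Nat.sub_self, coeff_zero_eq_eval_zero, hbb, one_mul, show 2 * n - n = n by omega] at hcoeff
  simp only [eval_pow, eval_add, eval_C, eval_mul, eval_X, mul_zero, add_zero] at hcoeff
  intro h
  rw [h, mul_zero] at hcoeff
  exact mul_ne_zero hlam (pow_ne_zero _ (mul_ne_zero two_ne_zero hab)) hcoeff

theorem apply_prod_mul_pow_mul_pow_eq_zero_of_isotropic (hsymm : ∀ x y, q x y = q y x)
    (hFujiki : ∀ x, intg (ι x ^ (2 * n)) = lam * q x x ^ n) {a : V} (haa : q a a = 0) :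
    ∀ (k : ℕ) (y : Fin k → V) (w : V) (j : ℕ), j + k < n →
      intg ((∏ i, ι (y i)) * ι a ^ (2 * n - k - j) * ι w ^ j) = 0
  | 0, _, w, j, hj => by
    rw [Fin.prod_univ_zero, one_mul, mul_comm, Nat.sub_zero]
    exact apply_pow_mul_pow_eq_zero_of_isotropic hsymm hFujiki haa w (by omega)
  | k + 1, y, w, j, hj => by
    have hline (t : ℝ) : intg ((∏ i : Fin k, ι (y i.castSucc)) * ι a ^ (2 * n - k - (j + 1)) *
        (ι w + t • ι (y (Fin.last k))) ^ (j + 1)) = 0 := by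
      rw [← map_smul, ← map_add]
      exact apply_prod_mul_pow_mul_pow_eq_zero_of_isotropic hsymm hFujiki haa k _ _ _ (by omega)
    have := apply_mul_pow_mul_pow_eq_zero_of_forall intg hline (i := 1) (by omega)
    rw [Fin.prod_univ_castSucc, show 2 * n - (k + 1) - j = 2 * n - k - (j + 1) by omega]
    rw [pow_one, Nat.add_sub_cancel] at this
    rw [← this]
    congr 1
    ring

end Fujiki

theorem stmt_6_general {V A : Type*} [AddCommGroup V] [Module ℝ V]
    [CommRing A] [Algebra ℝ A]
    (n : ℕ) (hn : 1 ≤ n)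
    (q : LinearMap.BilinForm ℝ V) (hsymm : ∀ x y : V, q x y = q y x)
    (ι : V →ₗ[ℝ] A) (intg : A →ₗ[ℝ] ℝ)
    (lam : ℝ) (hlam : 0 < lam)
    (hFujiki : ∀ x : V, intg (ι x ^ (2 * n)) = lam * (q x x) ^ n)
    (hdual : ∀ x : V,
      (∀ y : Fin (n - 1) → V, intg (ι x ^ (n + 1) * ∏ i, ι (y i)) = 0) →
        ι x ^ (n + 1) = 0)
    (a : V) (haa : q a a = 0)
    (hb : ∃ b : V, q b b = 0 ∧ q a b ≠ 0) :
    ι a ^ n ≠ 0 ∧ ι a ^ (n + 1) = 0 := by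
  obtain ⟨b, hbb, hab⟩ := hb
  refine ⟨fun h => ?_, hdual a fun y => ?_⟩
  · apply apply_pow_mul_pow_ne_zero_of_isotropic hsymm hFujiki hlam.ne' haa hbb hab
    rw [h, mul_zero, map_zero]
  · have := apply_prod_mul_pow_mul_pow_eq_zero_of_isotropic hsymm hFujiki haa (n - 1) y a 0
      (by omega)
    rwa [pow_zero, mul_one, mul_comm, show 2 * n - (n - 1) - 0 = n + 1 by omega] at this

/-- Structure of the subalgebra of cohomology generated by `H²` (Verbitsky):
let `A` be the (commutative) cohomology algebra, `ι : V → A` the inclusion of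
`H²`, `intg : A → ℝ` the integration, satisfying the Fujiki relation
`∫ x^{2n} = λ q(x,x)^n` with `λ > 0`, and suppose the degree-`2(n+1)` part of
the subalgebra generated by `V` is detected by integration against products of
`n - 1` classes from `V` (Poincaré duality on the subalgebra).  Then for a
nonzero isotropic `a ∈ V` (nondegeneracy of `q` of signature `(3, b₂ - 3)`
provides an isotropic `b` with `q(a,b) ≠ 0`), one has `a^n ≠ 0` and
`a^{n+1} = 0`. -/
theorem stmt_6 {V A : Type*} [AddCommGroup V] [Module ℝ V]
    [CommRing A] [Algebra ℝ A]
    (n : ℕ) (hn : 1 ≤ n)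
    (q : LinearMap.BilinForm ℝ V) (hsymm : ∀ x y : V, q x y = q y x)
    (ι : V →ₗ[ℝ] A) (intg : A →ₗ[ℝ] ℝ)
    (lam : ℝ) (hlam : 0 < lam)
    (hFujiki : ∀ x : V, intg (ι x ^ (2 * n)) = lam * (q x x) ^ n)
    (hdual : ∀ x : V,
      (∀ y : Fin (n - 1) → V, intg (ι x ^ (n + 1) * ∏ i, ι (y i)) = 0) →
        ι x ^ (n + 1) = 0)
    (a : V) (ha : a ≠ 0) (haa : q a a = 0)
    (hb : ∃ b : V, q b b = 0 ∧ q a b ≠ 0) :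
    ι a ^ n ≠ 0 ∧ ι a ^ (n + 1) = 0 :=
  stmt_6_general n hn q hsymm ι intg lam hlam hFujiki hdual a haa hb
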